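/- arXiv:1111.0205 — 3 statements merged into one kernel-verified Lean document; each statement's English description precedes it below -/
import Mathlib

section
/- Let 0 < β < 1, s ≤ t, q ≥ 0, and h ∈ L¹([s,t]) nonnegative. If v : [s,t] → ℝ₊ is absolutely continuous, v(s) ≤ q, and v'(r) ≤ -h(r)·v(r)^β for almost every r ∈ [s,t], then for all r ∈ [s,t] one has v(r) ≤ (max(q^(1-β) - (1-β)·∫_s^r h(τ)dτ, 0))^(1/(1-β)). -/
/-!
Put `p = 1 - β`. As long as `v` stays away from `0`, the function `v ^ p` is absolutely
continuous and the chain rule gives `(v ^ p)' = p v ^ (-β) v' ≤ -p h` almost everywhere, so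
integrating yields `v r ^ p ≤ v s ^ p - p ∫_s^r h`. Since `v' ≤ 0`, `v` is nonincreasing, hence
`v > 0` on all of `[s, r]` as soon as `v r > 0`; when `v r = 0` there is nothing to prove.
-/

open MeasureTheory intervalIntegral Set

theorem AbsolutelyContinuousOnInterval.congr {X : Type*} [PseudoMetricSpace X] {f g : ℝ → X}
    {a b : ℝ} (hf : AbsolutelyContinuousOnInterval f a b) (hfg : EqOn f g (uIcc a b)) :
    AbsolutelyContinuousOnInterval g a b := by
  refine Filter.Tendsto.congr' ?_ hf
  refine Filter.mem_inf_of_right fun E hE => Finset.sum_congr rfl fun i hi => ?_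
  rw [hfg (hE.1 i hi).1, hfg (hE.1 i hi).2]

theorem LipschitzOnWith.comp_absolutelyContinuousOnInterval {X Y : Type*} [PseudoMetricSpace X]
    [PseudoMetricSpace Y] {g : X → Y} {f : ℝ → X} {K : NNReal} {U : Set X} {a b : ℝ}
    (hg : LipschitzOnWith K g U) (hf : AbsolutelyContinuousOnInterval f a b)
    (hfU : MapsTo f (uIcc a b) U) : AbsolutelyContinuousOnInterval (g ∘ f) a b := by
  unfold AbsolutelyContinuousOnInterval at hf ⊢
  have hK := hf.const_mul (K : ℝ)
  rw [mul_zero] at hK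
  refine squeeze_zero'
    (Filter.Eventually.of_forall fun E => Finset.sum_nonneg fun i _ => dist_nonneg)
    (Filter.mem_inf_of_right fun E hE => ?_) hK
  rw [Set.mem_ofPred_eq, Finset.mul_sum]
  exact Finset.sum_le_sum fun i hi => hg.dist_le_mul _ (hfU (hE.1 i hi).1) _ (hfU (hE.1 i hi).2)

theorem AbsolutelyContinuousOnInterval.rpow_const {f : ℝ → ℝ} {a b : ℝ}
    (hf : AbsolutelyContinuousOnInterval f a b) (hpos : ∀ x ∈ uIcc a b, 0 < f x) (p : ℝ) :
    AbsolutelyContinuousOnInterval (fun x => f x ^ p) a b := by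
  obtain ⟨x₀, hx₀, hmin⟩ := isCompact_uIcc.exists_isMinOn nonempty_uIcc hf.continuousOn
  obtain ⟨x₁, -, hmax⟩ := isCompact_uIcc.exists_isMaxOn nonempty_uIcc hf.continuousOn
  have hrpow : ContDiffOn ℝ 1 (fun y : ℝ => y ^ p) (Icc (f x₀) (f x₁)) := fun y hy =>
    (Real.contDiffAt_rpow_const_of_ne ((hpos x₀ hx₀).trans_le hy.1).ne').contDiffWithinAt
  obtain ⟨K, hK⟩ := hrpow.exists_lipschitzOnWith one_ne_zero (convex_Icc _ _) isCompact_Icc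
  exact hK.comp_absolutelyContinuousOnInterval hf fun x hx => ⟨hmin hx, hmax hx⟩

section

variable {a b : ℝ} {v v' : ℝ → ℝ}

theorem absolutelyContinuousOnInterval_of_eq_add_integral (hab : a ≤ b)
    (hv' : IntervalIntegrable v' volume a b)
    (hv : ∀ x ∈ Icc a b, v x = v a + ∫ τ in a..x, v' τ) :
    AbsolutelyContinuousOnInterval v a b := by
  have hprim := hv'.absolutelyContinuousOnInterval_intervalIntegral left_mem_uIcc
  refine ((LipschitzWith.const (v a)).lipschitzOnWith.absolutelyContinuousOnInterval.add
    hprim).congr fun x hx => ?_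
  rw [uIcc_of_le hab] at hx
  exact (hv x hx).symm

theorem ae_hasDerivAt_of_eq_add_integral (hab : a ≤ b) (hv' : IntervalIntegrable v' volume a b)
    (hv : ∀ x ∈ Icc a b, v x = v a + ∫ τ in a..x, v' τ) :
    ∀ᵐ x ∂volume.restrict (Icc a b), HasDerivAt v (v' x) x := by
  rw [Measure.restrict_congr_set Ioo_ae_eq_Icc.symm]
  filter_upwards [ae_restrict_of_ae hv'.ae_hasDerivAt_integral, ae_restrict_mem measurableSet_Ioo]
    with x hderiv hx
  rw [uIcc_of_le hab] at hderiv
  refine ((hderiv (Ioo_subset_Icc_self hx) a ⟨le_rfl, hab⟩).const_add (v a))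
    |>.congr_of_eventuallyEq ?_
  filter_upwards [Ioo_mem_nhds hx.1 hx.2] with y hy
  exact hv y (Ioo_subset_Icc_self hy)

theorem antitoneOn_of_eq_add_integral (hv' : IntervalIntegrable v' volume a b)
    (hv : ∀ x ∈ Icc a b, v x = v a + ∫ τ in a..x, v' τ)
    (hneg : ∀ᵐ x ∂volume.restrict (Icc a b), v' x ≤ 0) :
    AntitoneOn v (Icc a b) := by
  intro x hx y hy hxy
  have hab := hx.1.trans hx.2
  have hint : ∀ c ∈ Icc a b, IntervalIntegrable v' volume a c := fun c hc =>
    hv'.mono_set (uIcc_subset_uIcc left_mem_uIcc (by rwa [uIcc_of_le hab]))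
  have hdiff : v y - v x = ∫ τ in x..y, v' τ := by
    rw [hv x hx, hv y hy, ← integral_interval_sub_left (hint y hy) (hint x hx)]
    ring
  have hnonpos : ∫ τ in x..y, v' τ ≤ 0 := by
    simpa using integral_mono_ae_restrict hxy ((hint x hx).symm.trans (hint y hy))
      intervalIntegrable_const
      (ae_restrict_of_ae_restrict_of_subset (Icc_subset_Icc hx.1 hy.2) hneg)
  linarith

theorem rpow_one_sub_le_sub_integral {β : ℝ} {h : ℝ → ℝ} (hβ : β < 1) (hab : a ≤ b)
    (hv : AbsolutelyContinuousOnInterval v a b) (hpos : ∀ x ∈ Icc a b, 0 < v x)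
    (hderiv : ∀ᵐ x ∂volume.restrict (Icc a b), HasDerivAt v (v' x) x)
    (hh : IntervalIntegrable h volume a b)
    (hsub : ∀ᵐ x ∂volume.restrict (Icc a b), v' x ≤ -h x * v x ^ β) :
    v b ^ (1 - β) ≤ v a ^ (1 - β) - (1 - β) * ∫ x in a..b, h x := by
  set p := 1 - β
  have hp : 0 < p := sub_pos.2 hβ
  have hw := hv.rpow_const (by rwa [uIcc_of_le hab]) p
  have hderiv_le :
      ∀ᵐ x ∂volume.restrict (Icc a b), deriv (fun y => v y ^ p) x ≤ -(p * h x) := by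
    filter_upwards [hderiv, hsub, ae_restrict_mem measurableSet_Icc] with x hd hs hx
    have hvx := hpos x hx
    have hcancel : v x ^ β * v x ^ (p - 1) = 1 := by
      rw [← Real.rpow_add hvx, show β + (p - 1) = 0 by ring, Real.rpow_zero]
    rw [(hd.rpow_const (Or.inl hvx.ne')).deriv]
    calc v' x * p * v x ^ (p - 1) ≤ -h x * v x ^ β * p * v x ^ (p - 1) := by gcongr
      _ = -(p * h x) := by linear_combination (-(p * h x)) * hcancel
  have hint : v b ^ p - v a ^ p ≤ -(p * ∫ x in a..b, h x) :=
    calc v b ^ p - v a ^ p = ∫ x in a..b, deriv (fun y => v y ^ p) x :=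
          hw.integral_deriv_eq_sub.symm
      _ ≤ ∫ x in a..b, -(p * h x) :=
          integral_mono_ae_restrict hab hw.intervalIntegrable_deriv (hh.const_mul p).neg hderiv_le
      _ = -(p * ∫ x in a..b, h x) := by
          rw [intervalIntegral.integral_neg, intervalIntegral.integral_const_mul]
  linarith

end

theorem comparison_lemma_general
    (β s t q : ℝ) (hβ1 : β < 1)
    (h v v' : ℝ → ℝ)
    (hh_int : IntervalIntegrable h volume s t)
    (hh_nonneg : ∀ r ∈ Icc s t, 0 ≤ h r)
    (hv_nonneg : ∀ r ∈ Icc s t, 0 ≤ v r)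
    (hv'_int : IntervalIntegrable v' volume s t)
    (hAC : ∀ r ∈ Icc s t, v r = v s + ∫ τ in s..r, v' τ)
    (hsub : ∀ᵐ r ∂(volume.restrict (Icc s t)), v' r ≤ - h r * (v r) ^ β)
    (hv0 : v s ≤ q) :
    ∀ r ∈ Icc s t,
      v r ≤ (max (q ^ (1 - β) - (1 - β) * ∫ τ in s..r, h τ) 0) ^ (1 / (1 - β)) := by
  intro r hr
  obtain hvr | hvr := (hv_nonneg r hr).eq_or_lt
  · rw [← hvr]
    exact Real.rpow_nonneg (le_max_right _ _) _
  have hIcc : Icc s r ⊆ Icc s t := Icc_subset_Icc_right hr.2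
  have huIcc : uIcc s r ⊆ uIcc s t := uIcc_subset_uIcc left_mem_uIcc (Icc_subset_uIcc hr)
  have hv'_int_r := hv'_int.mono_set huIcc
  have hAC_r : ∀ x ∈ Icc s r, v x = v s + ∫ τ in s..x, v' τ := fun x hx => hAC x (hIcc hx)
  have hsub_r := ae_restrict_of_ae_restrict_of_subset hIcc hsub
  have hanti : AntitoneOn v (Icc s r) := by
    refine antitoneOn_of_eq_add_integral hv'_int_r hAC_r ?_
    filter_upwards [hsub_r, ae_restrict_mem measurableSet_Icc] with x hx hxr
    nlinarith [hh_nonneg x (hIcc hxr), Real.rpow_nonneg (hv_nonneg x (hIcc hxr)) β]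
  have hpos : ∀ x ∈ Icc s r, 0 < v x := fun x hx =>
    hvr.trans_le (hanti hx ⟨hr.1, le_rfl⟩ hx.2)
  have hcomp := rpow_one_sub_le_sub_integral hβ1 hr.1
    (absolutelyContinuousOnInterval_of_eq_add_integral hr.1 hv'_int_r hAC_r) hpos
    (ae_hasDerivAt_of_eq_add_integral hr.1 hv'_int_r hAC_r) (hh_int.mono_set huIcc) hsub_r
  have hq : v s ^ (1 - β) ≤ q ^ (1 - β) :=
    Real.rpow_le_rpow (hpos s ⟨le_rfl, hr.1⟩).le hv0 (by linarith)
  rw [one_div, Real.le_rpow_inv_iff_of_pos hvr.le (le_max_right _ _) (by linarith)]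
  exact le_max_of_le_left (by linarith)

/-- Comparison lemma for subsolutions of the singular ODE `y' = -h(r) y^β`. -/
theorem comparison_lemma
    (β s t q : ℝ) (hβ : 0 < β) (hβ1 : β < 1) (hst : s ≤ t) (hq : 0 ≤ q)
    (h v v' : ℝ → ℝ)
    (hh_int : IntervalIntegrable h volume s t)
    (hh_nonneg : ∀ r ∈ Icc s t, 0 ≤ h r)
    (hv_nonneg : ∀ r ∈ Icc s t, 0 ≤ v r)
    (hv'_int : IntervalIntegrable v' volume s t)
    (hAC : ∀ r ∈ Icc s t, v r = v s + ∫ τ in s..r, v' τ)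
    (hsub : ∀ᵐ r ∂(volume.restrict (Icc s t)), v' r ≤ - h r * (v r) ^ β)
    (hv0 : v s ≤ q) :
    ∀ r ∈ Icc s t,
      v r ≤ (max (q ^ (1 - β) - (1 - β) * ∫ τ in s..r, h τ) 0) ^ (1 / (1 - β)) :=
  comparison_lemma_general β s t q hβ1 h v v' hh_int hh_nonneg hv_nonneg hv'_int hAC hsub hv0
end

section
/- Suppose A : ℝ × V × Ω → V* satisfies the growth/coercivity conditions: 2⟨A(t,v;ω), v⟩ ≤ C₁(t)‖v‖_H² − c(t)‖v‖_V^α + f(t) and ‖A(t,v;ω)‖_{V*}^(α/(α-1)) ≤ C₁(t)‖v‖_H² + C₂(t)‖v‖_V^α + f(t), with 1 < α < 2. Fix a path N : ℝ → V and set A_ω(t,v) := A(t, v + N_t; ω). Then A_ω satisfies a coercivity estimate of the same form: 2⟨A_ω(t,v), v⟩ ≤ C̃₁(t)‖v‖_H² − c̃(t)‖v‖_V^α + f̃(t), where C̃₁(t) = 2C₁(t)(1+ε₁), c̃(t) = 2^{1-α}(c(t) − ε₁C₂(t)) for any sufficiently small ε₁ > 0, and f̃(t) = (1+ε₁)f(t)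 + (C_{ε₁} + c(t) − ε₁C₂(t))‖N_t‖_V^α + 2C₁(t)(1+ε₁)‖N_t‖_H². -/
/-!
Split `⟨A(v + N), v⟩ = ⟨A(v + N), v + N⟩ - ⟨A(v + N), N⟩`. The first term is bounded by the
coercivity of `A` at `v + N`; the second by `‖A(v + N)‖ ‖N‖` and Young's inequality with a small
weight on `‖A(v + N)‖ ^ (α / (α - 1))`, which the growth bound controls. One then passes from
`v + N` back to `v` using `‖x + y‖² ≤ 2 (‖x‖² + ‖y‖²)` in `H` and
`‖v + N‖ ^ α ≥ 2 ^ (1 - α) ‖v‖ ^ α - ‖N‖ ^ α` in `V`. The first of these needs `C₁ ≥ 0`: since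
`α < 2`, the growth bound along a ray `s • w` forces it, unless `ι` vanishes identically.
-/

open Filter Topology

theorem Real.rpow_add_le_mul_rpow_add_rpow {a b p : ℝ} (ha : 0 ≤ a) (hb : 0 ≤ b) (hp : 1 ≤ p) :
    (a + b) ^ p ≤ 2 ^ (p - 1) * (a ^ p + b ^ p) := by
  have h := NNReal.coe_le_coe.2 <|
    NNReal.rpow_add_le_mul_rpow_add_rpow ⟨a, ha⟩ ⟨b, hb⟩ hp
  push_cast [NNReal.coe_rpow] at h
  exact h

theorem Real.exists_mul_le_mul_rpow_add_mul_rpow {p q ε : ℝ} (hpq : p.HolderConjugate q)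
    (hε : 0 < ε) : ∃ C > 0, ∀ {a b : ℝ}, 0 ≤ a → 0 ≤ b → a * b ≤ ε * a ^ p + C * b ^ q := by
  have hεp : 0 < ε * p := mul_pos hε hpq.pos
  obtain ⟨l, hl, hlp⟩ : ∃ l > 0, l ^ p = ε * p :=
    ⟨_, Real.rpow_pos_of_pos hεp _, Real.rpow_inv_rpow hεp.le hpq.ne_zero⟩
  have hq := hpq.symm.pos
  refine ⟨(q * l ^ q)⁻¹, by positivity, fun {a b} ha hb => ?_⟩
  -- Young's inequality for `(l * a) * (b / l)`
  have h := Real.young_inequality_of_nonneg (mul_nonneg hl.le ha) (div_nonneg hb hl.le) hpq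
  rw [Real.mul_rpow hl.le ha, hlp, Real.div_rpow hb hl.le] at h
  have := hpq.ne_zero
  convert h using 1 <;> field_simp

theorem two_rpow_one_sub_mul_norm_rpow_le {E : Type*} [SeminormedAddCommGroup E] {α : ℝ}
    (hα : 1 ≤ α) (v w : E) : 2 ^ (1 - α) * ‖v‖ ^ α ≤ ‖v + w‖ ^ α + ‖w‖ ^ α := by
  have hv : ‖v‖ ≤ ‖v + w‖ + ‖w‖ := by simpa using norm_sub_le (v + w) w
  calc 2 ^ (1 - α) * ‖v‖ ^ α ≤ 2 ^ (1 - α) * (2 ^ (α - 1) * (‖v + w‖ ^ α + ‖w‖ ^ α)) := by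
        gcongr
        exact (Real.rpow_le_rpow (norm_nonneg v) hv (by linarith)).trans
          (Real.rpow_add_le_mul_rpow_add_rpow (norm_nonneg _) (norm_nonneg _) hα)
    _ = ‖v + w‖ ^ α + ‖w‖ ^ α := by
        rw [← mul_assoc, ← Real.rpow_add two_pos]; norm_num

theorem Real.nonneg_of_forall_nonneg_mul_sq_add_mul_rpow {a b c α : ℝ} (hα : α < 2)
    (h : ∀ s > 0, 0 ≤ a * s ^ 2 + b * s ^ α + c) : 0 ≤ a := by
  have hlim : Tendsto (fun s : ℝ => a + b * s ^ (-(2 - α)) + c * s ^ (-2 : ℝ)) atTop (𝓝 a) := by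
    simpa using (((tendsto_rpow_neg_atTop (by linarith : 0 < 2 - α)).const_mul b).const_add a).add
      ((tendsto_rpow_neg_atTop two_pos).const_mul c)
  refine ge_of_tendsto hlim ?_
  filter_upwards [eventually_gt_atTop 0] with s hs
  have hs2 : (0 : ℝ) < s ^ 2 := by positivity
  convert div_nonneg (h s hs) hs2.le using 1
  rw [neg_sub, Real.rpow_sub hs, Real.rpow_neg hs.le]
  norm_cast
  field_simp

section Embedding

variable {E F : Type*} [SeminormedAddCommGroup E] [NormedSpace ℝ E]
  [SeminormedAddCommGroup F] [NormedSpace ℝ F] (ι : E →L[ℝ] F) {a b c α : ℝ}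

theorem nonneg_of_forall_nonneg_mul_norm_sq_add_mul_norm_rpow (hα : α < 2)
    (h : ∀ v, 0 ≤ a * ‖ι v‖ ^ 2 + b * ‖v‖ ^ α + c) {w : E} (hw : ‖ι w‖ ≠ 0) : 0 ≤ a := by
  refine nonneg_of_mul_nonneg_left ?_ (by positivity : 0 < ‖ι w‖ ^ 2)
  refine Real.nonneg_of_forall_nonneg_mul_sq_add_mul_rpow (b := b * ‖w‖ ^ α) (c := c) hα
    fun s hs => ?_
  convert h (s • w) using 2
  rw [map_smul, norm_smul, norm_smul, Real.norm_of_nonneg hs.le,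
    Real.mul_rpow hs.le (norm_nonneg w)]
  ring

theorem mul_norm_map_add_sq_le_of_forall_nonneg (hα : α < 2)
    (h : ∀ v, 0 ≤ a * ‖ι v‖ ^ 2 + b * ‖v‖ ^ α + c) (x y : E) :
    a * ‖ι (x + y)‖ ^ 2 ≤ 2 * a * (‖ι x‖ ^ 2 + ‖ι y‖ ^ 2) := by
  rcases le_or_gt 0 a with ha | ha
  · rw [mul_comm 2 a, mul_assoc]
    refine mul_le_mul_of_nonneg_left ?_ ha
    exact (pow_le_pow_left₀ (norm_nonneg _) (map_add ι x y ▸ norm_add_le _ _) 2).trans add_sq_le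
  · have hzero : ∀ v, ‖ι v‖ = 0 := fun v => by
      by_contra hv
      exact ha.not_ge (nonneg_of_forall_nonneg_mul_norm_sq_add_mul_norm_rpow ι hα h hv)
    simp only [hzero]
    norm_num

end Embedding

theorem shifted_operator_coercivity_general
    {V H : Type*} [NormedAddCommGroup V] [NormedSpace ℝ V]
    [NormedAddCommGroup H] [InnerProductSpace ℝ H]
    (ι : V →L[ℝ] H)
    (α : ℝ) (hα1 : 1 < α) (hα2 : α < 2)
    (A : ℝ → V → StrongDual ℝ V)
    (C₁ C₂ c f : ℝ → ℝ)
    (hcoerc : ∀ t : ℝ, ∀ v : V,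
      2 * A t v v ≤ C₁ t * ‖ι v‖ ^ 2 - c t * ‖v‖ ^ α + f t)
    (hgrowth : ∀ t : ℝ, ∀ v : V,
      ‖A t v‖ ^ (α / (α - 1)) ≤ C₁ t * ‖ι v‖ ^ 2 + C₂ t * ‖v‖ ^ α + f t)
    (N : ℝ → V) :
    ∀ ε₁ > (0:ℝ), (∀ t, ε₁ * C₂ t ≤ c t) →
      ∃ Cε > (0:ℝ), ∀ t : ℝ, ∀ v : V,
        2 * A t (v + N t) v ≤
          (2 * C₁ t * (1 + ε₁)) * ‖ι v‖ ^ 2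
          - ((2:ℝ) ^ (1 - α) * (c t - ε₁ * C₂ t)) * ‖v‖ ^ α
          + ((1 + ε₁) * f t + (Cε + c t - ε₁ * C₂ t) * ‖N t‖ ^ α
              + 2 * C₁ t * (1 + ε₁) * ‖ι (N t)‖ ^ 2) := by
  intro ε hε hεC
  obtain ⟨C, hC, hyoung⟩ := Real.exists_mul_le_mul_rpow_add_mul_rpow
    (Real.HolderConjugate.conjExponent hα1).symm (half_pos hε)
  refine ⟨2 * C, by positivity, fun t v => ?_⟩
  set T := A t (v + N t)
  have hsplit : T v = T (v + N t) - T (N t) := by rw [map_add]; ring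
  have hcross : -T (N t) ≤ ε / 2 * ‖T‖ ^ (α / (α - 1)) + C * ‖N t‖ ^ α :=
    (neg_le_abs _).trans <| (T.le_opNorm (N t)).trans (hyoung (norm_nonneg _) (norm_nonneg _))
  have hH := mul_le_mul_of_nonneg_left
    (mul_norm_map_add_sq_le_of_forall_nonneg ι hα2
      (fun w => (Real.rpow_nonneg (norm_nonneg _) _).trans (hgrowth t w)) v (N t))
    (by positivity : 0 ≤ 1 + ε)
  have hV := mul_le_mul_of_nonneg_left (two_rpow_one_sub_mul_norm_rpow_le hα1.le v (N t))
    (sub_nonneg.2 (hεC t))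
  have hT := mul_le_mul_of_nonneg_left (hgrowth t (v + N t)) hε.le
  rw [hsplit]
  linarith [hcoerc t (v + N t)]

/-- The shifted operator `A_ω(t,v) := A(t, v + N_t)` satisfies a coercivity estimate of
the same form as `A`, with the explicit transformed coefficients. -/
theorem shifted_operator_coercivity
    {V H : Type*} [NormedAddCommGroup V] [NormedSpace ℝ V]
    [NormedAddCommGroup H] [InnerProductSpace ℝ H] [CompleteSpace H]
    (ι : V →L[ℝ] H) (hι_inj : Function.Injective ι) (hι_dense : DenseRange ι)
    (α : ℝ) (hα1 : 1 < α) (hα2 : α < 2)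
    (A : ℝ → V → StrongDual ℝ V)
    (C₁ C₂ c f : ℝ → ℝ) (hc_pos : ∀ t, 0 < c t)
    (hcoerc : ∀ t : ℝ, ∀ v : V,
      2 * A t v v ≤ C₁ t * ‖ι v‖ ^ 2 - c t * ‖v‖ ^ α + f t)
    (hgrowth : ∀ t : ℝ, ∀ v : V,
      ‖A t v‖ ^ (α / (α - 1)) ≤ C₁ t * ‖ι v‖ ^ 2 + C₂ t * ‖v‖ ^ α + f t)
    (N : ℝ → V) :
    ∀ ε₁ > (0:ℝ), (∀ t, ε₁ * C₂ t ≤ c t) →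
      ∃ Cε > (0:ℝ), ∀ t : ℝ, ∀ v : V,
        2 * A t (v + N t) v ≤
          (2 * C₁ t * (1 + ε₁)) * ‖ι v‖ ^ 2
          - ((2:ℝ) ^ (1 - α) * (c t - ε₁ * C₂ t)) * ‖v‖ ^ α
          + ((1 + ε₁) * f t + (Cε + c t - ε₁ * C₂ t) * ‖N t‖ ^ α
              + 2 * C₁ t * (1 + ε₁) * ‖ι (N t)‖ ^ 2) :=
  shifted_operator_coercivity_general ι α hα1 hα2 A C₁ C₂ c f hcoerc hgrowth N
end

section
/- Let φ be a contractive RDS on a separable Hilbert space H with a weak-* mean ergodic associated Markov semigroup P_t f(x) = E[f(φ(t,·)x)] with limiting invariant measure μ. If for every pair x, y ∈ H one has ‖φ(t,ω)x − φ(t,ω)y‖_H → 0 ℙ-a.s. as t → ∞, then P_t is strongly mixing: for every ν ∈ M₁(H), P_t*ν → μ weakly as t → ∞. -/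
/-!
By the Lipschitz form of the portmanteau theorem it suffices to test `P_t^* ν → μ` against a
bounded `K`-Lipschitz `f`. Invariance of `μ` gives
`∫ P_t f dν - ∫ f dμ = ∫∫ (P_t f x - P_t f y) dμ(y) dν(x)`, and
`|f (φ t ω x) - f (φ t ω y)| ≤ min (2‖f‖) (K * dist (φ t ω x) (φ t ω y))`.
This bound is dominated by the constant `2‖f‖` and tends to `0` almost surely for every pair
`(x, y)`, so dominated convergence, first in `ω` and then in `(x, y)`, shows that the difference
tends to `0`.
-/

open MeasureTheory Filter Topology NNReal BoundedContinuousFunction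

lemma abs_integral_sub_integral_le_integral_prod {α : Type*} [MeasurableSpace α]
    (ν μ : Measure α) [IsProbabilityMeasure ν] [IsProbabilityMeasure μ] {g : α → ℝ}
    (hν : Integrable g ν) (hμ : Integrable g μ) :
    |∫ x, g x ∂ν - ∫ y, g y ∂μ| ≤ ∫ p, |g p.1 - g p.2| ∂(ν.prod μ) := by
  have hsplit : ∫ p, (g p.1 - g p.2) ∂(ν.prod μ) = ∫ x, g x ∂ν - ∫ y, g y ∂μ := by
    rw [integral_sub (hν.comp_fst μ) (hμ.comp_snd ν), integral_fun_fst, integral_fun_snd]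
    simp
  exact hsplit ▸ abs_integral_le_integral_abs

lemma norm_min_mul_dist_le {H : Type*} [PseudoMetricSpace H] {C : ℝ} (K : ℝ≥0) (hC : 0 ≤ C)
    (a b : H) : ‖min C (K * dist a b)‖ ≤ C := by
  rw [Real.norm_of_nonneg (le_min hC (by positivity))]
  exact min_le_left _ _

section RandomMap

variable {Ω H : Type*} [MeasurableSpace Ω] (P : Measure Ω) [IsProbabilityMeasure P]
  [PseudoMetricSpace H]

noncomputable def truncatedGap (ψ : Ω → H → H) (C : ℝ) (K : ℝ≥0) (p : H × H) : ℝ :=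
  ∫ ω, min C (K * dist (ψ ω p.1) (ψ ω p.2)) ∂P

variable {P} {ψ : Ω → H → H} {C : ℝ} {K : ℝ≥0}

lemma norm_truncatedGap_le (hC : 0 ≤ C) (p : H × H) : ‖truncatedGap P ψ C K p‖ ≤ C := by
  simpa [truncatedGap] using norm_integral_le_of_norm_le_const (μ := P)
    (Eventually.of_forall fun ω => norm_min_mul_dist_le K hC (ψ ω p.1) (ψ ω p.2))

variable [MeasurableSpace H] [OpensMeasurableSpace H]

lemma integrable_comp_apply (f : H →ᵇ ℝ) (hψ : Measurable fun q : Ω × H => ψ q.1 q.2) (x : H) :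
    Integrable (fun ω => f (ψ ω x)) P :=
  .of_bound (f.continuous.measurable.comp
      (hψ.comp (measurable_id.prodMk measurable_const))).aestronglyMeasurable
    ‖f‖ (Eventually.of_forall fun _ => f.norm_coe_le_norm _)

lemma integrable_integral_comp_apply (f : H →ᵇ ℝ) (hψ : Measurable fun q : Ω × H => ψ q.1 q.2)
    (ρ : Measure H) [IsFiniteMeasure ρ] :
    Integrable (fun x => ∫ ω, f (ψ ω x) ∂P) ρ := by
  refine .of_bound ?_ ‖f‖ (Eventually.of_forall fun x => ?_)
  · exact ((f.continuous.measurable.comp (hψ.comp (measurable_snd.prodMk measurable_fst))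
      ).stronglyMeasurable.integral_prod_right').aestronglyMeasurable
  · simpa using norm_integral_le_of_norm_le_const (μ := P)
      (Eventually.of_forall fun ω => f.norm_coe_le_norm (ψ ω x))

lemma integral_map_prod_eq_integral_integral (hψ : Measurable fun q : Ω × H => ψ q.1 q.2)
    (ν : Measure H) [IsFiniteMeasure ν] (f : H →ᵇ ℝ) :
    ∫ x, f x ∂((P.prod ν).map fun q => ψ q.1 q.2) = ∫ x, ∫ ω, f (ψ ω x) ∂P ∂ν := by
  rw [integral_map hψ.aemeasurable f.continuous.aestronglyMeasurable, integral_prod_symm]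
  exact .of_bound (f.continuous.measurable.comp hψ).aestronglyMeasurable ‖f‖
    (Eventually.of_forall fun _ => f.norm_coe_le_norm _)

variable [SecondCountableTopology H]

lemma measurable_min_mul_dist (hψ : Measurable fun q : Ω × H => ψ q.1 q.2) :
    Measurable fun q : (H × H) × Ω => min C (K * dist (ψ q.2 q.1.1) (ψ q.2 q.1.2)) := by
  have h₁ : Measurable fun q : (H × H) × Ω => ψ q.2 q.1.1 :=
    hψ.comp (measurable_snd.prodMk (measurable_fst.comp measurable_fst))
  have h₂ : Measurable fun q : (H × H) × Ω => ψ q.2 q.1.2 :=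
    hψ.comp (measurable_snd.prodMk (measurable_snd.comp measurable_fst))
  exact measurable_const.min ((h₁.dist h₂).const_mul _)

lemma integrable_min_mul_dist (hψ : Measurable fun q : Ω × H => ψ q.1 q.2) (hC : 0 ≤ C)
    (x y : H) : Integrable (fun ω => min C (K * dist (ψ ω x) (ψ ω y))) P :=
  .of_bound ((measurable_min_mul_dist hψ).comp
      (measurable_const.prodMk measurable_id : Measurable fun ω : Ω => ((x, y), ω))
      ).aestronglyMeasurable C
    (Eventually.of_forall fun _ => norm_min_mul_dist_le K hC _ _)

lemma stronglyMeasurable_truncatedGap (hψ : Measurable fun q : Ω × H => ψ q.1 q.2) :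
    StronglyMeasurable (truncatedGap P ψ C K) :=
  (measurable_min_mul_dist hψ).stronglyMeasurable.integral_prod_right'

lemma integrable_truncatedGap (hψ : Measurable fun q : Ω × H => ψ q.1 q.2) (hC : 0 ≤ C)
    (ρ : Measure (H × H)) [IsFiniteMeasure ρ] :
    Integrable (truncatedGap P ψ C K) ρ :=
  .of_bound (stronglyMeasurable_truncatedGap hψ).aestronglyMeasurable C
    (Eventually.of_forall (norm_truncatedGap_le hC))

lemma abs_integral_comp_sub_le_truncatedGap (f : H →ᵇ ℝ) (hf : LipschitzWith K f)
    (hC : ∀ a b, dist (f a) (f b) ≤ C) (hψ : Measurable fun q : Ω × H => ψ q.1 q.2) (x y : H) :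
    |∫ ω, f (ψ ω x) ∂P - ∫ ω, f (ψ ω y) ∂P| ≤ truncatedGap P ψ C K (x, y) := by
  rw [← integral_sub (integrable_comp_apply f hψ x) (integrable_comp_apply f hψ y)]
  refine abs_integral_le_integral_abs.trans (integral_mono_of_nonneg
    (Eventually.of_forall fun _ => abs_nonneg _) ?_ (Eventually.of_forall fun ω => ?_))
  · exact integrable_min_mul_dist hψ (dist_nonneg.trans (hC x x)) x y
  · simp only [← Real.dist_eq]
    exact le_min (hC _ _) (hf.dist_le_mul _ _)

end RandomMap

section RandomDynamicalSystem

variable {Ω H T : Type*} [MeasurableSpace Ω] {P : Measure Ω} [IsProbabilityMeasure P]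
  [PseudoMetricSpace H] [MeasurableSpace H] [OpensMeasurableSpace H] [SecondCountableTopology H]
  {l : Filter T} [l.IsCountablyGenerated] {φ : T → Ω → H → H} {C : ℝ} {K : ℝ≥0}

lemma tendsto_truncatedGap_nhds_zero (hφ : ∀ t, Measurable fun q : Ω × H => φ t q.1 q.2)
    (hC : 0 ≤ C) {x y : H}
    (hconv : ∀ᵐ ω ∂P, Tendsto (fun t => dist (φ t ω x) (φ t ω y)) l (𝓝 0)) :
    Tendsto (fun t => truncatedGap P (φ t) C K (x, y)) l (𝓝 0) := by
  have hlim : ∀ᵐ ω ∂P, Tendsto (fun t => min C (K * dist (φ t ω x) (φ t ω y))) l (𝓝 0) :=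
    hconv.mono fun ω hω => by
      simpa [min_eq_right hC] using (tendsto_const_nhds (x := C)).min (hω.const_mul (K : ℝ))
  simpa [truncatedGap] using tendsto_integral_filter_of_dominated_convergence (fun _ => C)
    (.of_forall fun t => (integrable_min_mul_dist (hφ t) hC x y).aestronglyMeasurable)
    (.of_forall fun _ => .of_forall fun _ => norm_min_mul_dist_le K hC _ _)
    (integrable_const C) hlim

lemma tendsto_integral_truncatedGap_nhds_zero (hφ : ∀ t, Measurable fun q : Ω × H => φ t q.1 q.2)
    (hC : 0 ≤ C) (hconv : ∀ x y, ∀ᵐ ω ∂P, Tendsto (fun t => dist (φ t ω x) (φ t ω y)) l (𝓝 0))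
    (ρ : Measure (H × H)) [IsFiniteMeasure ρ] :
    Tendsto (fun t => ∫ p, truncatedGap P (φ t) C K p ∂ρ) l (𝓝 0) := by
  simpa using tendsto_integral_filter_of_dominated_convergence (fun _ => C)
    (.of_forall fun t => (stronglyMeasurable_truncatedGap (hφ t)).aestronglyMeasurable)
    (.of_forall fun _ => .of_forall (norm_truncatedGap_le hC)) (integrable_const C)
    (.of_forall fun p => tendsto_truncatedGap_nhds_zero hφ hC (hconv p.1 p.2))

lemma tendsto_integral_integral_comp_of_lipschitzWith
    (hφ : ∀ t, Measurable fun q : Ω × H => φ t q.1 q.2)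
    (hconv : ∀ x y, ∀ᵐ ω ∂P, Tendsto (fun t => dist (φ t ω x) (φ t ω y)) l (𝓝 0))
    (μ ν : Measure H) [IsProbabilityMeasure μ] [IsProbabilityMeasure ν]
    (f : H →ᵇ ℝ) (hf : LipschitzWith K f)
    (hμinv : ∀ᶠ t in l, ∫ x, ∫ ω, f (φ t ω x) ∂P ∂μ = ∫ x, f x ∂μ) :
    Tendsto (fun t => ∫ x, ∫ ω, f (φ t ω x) ∂P ∂ν) l (𝓝 (∫ x, f x ∂μ)) := by
  have hC : 0 ≤ 2 * ‖f‖ := by positivity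
  refine tendsto_sub_nhds_zero_iff.1 <| squeeze_zero_norm' ?_
    (tendsto_integral_truncatedGap_nhds_zero (K := K) hφ hC hconv (ν.prod μ))
  filter_upwards [hμinv] with t ht
  rw [← ht, Real.norm_eq_abs]
  refine (abs_integral_sub_integral_le_integral_prod ν μ
    (integrable_integral_comp_apply f (hφ t) ν) (integrable_integral_comp_apply f (hφ t) μ)).trans
    (integral_mono ?_ (integrable_truncatedGap (hφ t) hC _) fun p =>
      abs_integral_comp_sub_le_truncatedGap f hf f.dist_le_two_norm (hφ t) p.1 p.2)
  exact (((integrable_integral_comp_apply f (hφ t) ν).comp_fst μ).sub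
    ((integrable_integral_comp_apply f (hφ t) μ).comp_snd ν)).abs

end RandomDynamicalSystem

theorem contractive_RDS_strongly_mixing_general
    {Ω : Type*} [MeasurableSpace Ω] (P : Measure Ω) [IsProbabilityMeasure P]
    {H : Type*} [NormedAddCommGroup H]
    [TopologicalSpace.SeparableSpace H] [MeasurableSpace H] [BorelSpace H]
    (φ : ℝ → Ω → H → H)
    (hφmeas : ∀ t : ℝ, Measurable fun q : Ω × H => φ t q.1 q.2)
    (μ : Measure H) [IsProbabilityMeasure μ]
    (hμinv : ∀ t ≥ (0:ℝ), ∀ f : BoundedContinuousFunction H ℝ,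
      ∫ x, ∫ ω, f (φ t ω x) ∂P ∂μ = ∫ x, f x ∂μ)
    (hconv : ∀ x y : H, ∀ᵐ ω ∂P,
      Tendsto (fun t : ℝ => ‖φ t ω x - φ t ω y‖) atTop (𝓝 0)) :
    ∀ (ν : Measure H), IsProbabilityMeasure ν →
      ∀ f : BoundedContinuousFunction H ℝ,
        Tendsto (fun t : ℝ => ∫ x, ∫ ω, f (φ t ω x) ∂P ∂ν) atTop
          (𝓝 (∫ x, f x ∂μ)) := by
  intro ν _ f
  have : SecondCountableTopology H := UniformSpace.secondCountable_of_separable H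
  have hconv_dist : ∀ x y, ∀ᵐ ω ∂P, Tendsto (fun t => dist (φ t ω x) (φ t ω y)) atTop (𝓝 0) := by
    simpa only [dist_eq_norm] using hconv
  -- `law t` is `P_t^* ν`
  let law (t : ℝ) : ProbabilityMeasure H :=
    ⟨(P.prod ν).map fun q => φ t q.1 q.2,
      Measure.isProbabilityMeasure_map (hφmeas t).aemeasurable⟩
  have hlaw_integral (t : ℝ) (g : H →ᵇ ℝ) :
      ∫ x, g x ∂(law t : Measure H) = ∫ x, ∫ ω, g (φ t ω x) ∂P ∂ν :=
    integral_map_prod_eq_integral_integral (hφmeas t) ν g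
  have hlaw : Tendsto law atTop (𝓝 ⟨μ, ‹_›⟩) := by
    refine tendsto_iff_forall_lipschitz_integral_tendsto.2 fun g ⟨C, hC⟩ ⟨K, hK⟩ => ?_
    let G : H →ᵇ ℝ := mkOfBound ⟨g, hK.continuous⟩ C hC
    change Tendsto (fun t => ∫ x, G x ∂(law t : Measure H)) atTop (𝓝 (∫ x, G x ∂μ))
    simpa only [hlaw_integral] using
      tendsto_integral_integral_comp_of_lipschitzWith hφmeas hconv_dist μ ν G hK
        ((eventually_ge_atTop 0).mono fun t ht => hμinv t ht G)
  simpa only [hlaw_integral, ProbabilityMeasure.coe_mk] using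
    ProbabilityMeasure.tendsto_iff_forall_integral_tendsto.1 hlaw f

/-- If a contractive RDS has an invariant measure `μ` and trajectories from any two
initial points come together a.s., then the Markov semigroup is strongly mixing:
`P_t^* ν → μ` weakly for every probability measure `ν`. -/
theorem contractive_RDS_strongly_mixing
    {Ω : Type*} [MeasurableSpace Ω] (P : Measure Ω) [IsProbabilityMeasure P]
    {H : Type*} [NormedAddCommGroup H] [InnerProductSpace ℝ H] [CompleteSpace H]
    [TopologicalSpace.SeparableSpace H] [MeasurableSpace H] [BorelSpace H]
    (φ : ℝ → Ω → H → H)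
    (hφmeas : ∀ t : ℝ, Measurable fun q : Ω × H => φ t q.1 q.2)
    (hcontr : ∀ t ≥ (0:ℝ), ∀ ω : Ω, ∀ x y : H,
      ‖φ t ω x - φ t ω y‖ ≤ ‖x - y‖)
    (μ : Measure H) [IsProbabilityMeasure μ]
    (hμinv : ∀ t ≥ (0:ℝ), ∀ f : BoundedContinuousFunction H ℝ,
      ∫ x, ∫ ω, f (φ t ω x) ∂P ∂μ = ∫ x, f x ∂μ)
    (hconv : ∀ x y : H, ∀ᵐ ω ∂P,
      Tendsto (fun t : ℝ => ‖φ t ω x - φ t ω y‖) atTop (𝓝 0)) :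
    ∀ (ν : Measure H), IsProbabilityMeasure ν →
      ∀ f : BoundedContinuousFunction H ℝ,
        Tendsto (fun t : ℝ => ∫ x, ∫ ω, f (φ t ω x) ∂P ∂ν) atTop
          (𝓝 (∫ x, f x ∂μ)) :=
  contractive_RDS_strongly_mixing_general P φ hφmeas μ hμinv hconv
end
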